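/- Define g(p) = ∫_ℝ w̃_p(x)² dx for 1 < p < 3, where w̃_p(x) = (2√p/(e^{(p−1)x} + e^{(1−p)x}))^{1/(p−1)}. Then g(2) = 4 and g(p) = 4 + (6 − 12·ln 2)(p − 2) + o(p − 2) as p → 2. -/

import Mathlib

/-!
The substitution `x = artanh u / (p - 1)` turns `w̃_p(x)² dx` into
`(p - 1)⁻¹ p^t (1 - u²)^(t - 1) du` with `t = 1 / (p - 1)`, so
`g p = t · p^t · J t` where `J t = ∫_{-1}^{1} (1 - u²)^(t - 1) du`.
At `p = 2` we have `t = 1` and `J 1 = 2`; differentiating under the integral sign,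
`J' 1 = ∫_{-1}^{1} log (1 - u²) du = 4 log 2 - 4`, and the product and chain rules give
`g' 2 = 6 - 12 log 2`.
-/

open Real MeasureTheory

noncomputable def wtilde (p : ℝ) (x : ℝ) : ℝ :=
  (2 * Real.sqrt p / (Real.exp ((p - 1) * x) + Real.exp ((1 - p) * x))) ^ (1 / (p - 1))

noncomputable def g (p : ℝ) : ℝ := ∫ x : ℝ, (wtilde p x) ^ 2

open Set Filter Topology

namespace Real

theorem hasDerivAt_artanh {x : ℝ} (hx : x ∈ Ioo (-1) 1) :
    HasDerivAt artanh (1 - x ^ 2)⁻¹ x := by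
  obtain ⟨h₁, h₂⟩ := hx
  have hlog : HasDerivAt (fun y => (log (1 + y) - log (1 - y)) / 2) (1 - x ^ 2)⁻¹ x := by
    refine ((((hasDerivAt_id x).const_add 1).log (by simp; linarith)).sub
      (((hasDerivAt_id x).const_sub 1).log (by simp; linarith))).div_const 2 |>.congr_deriv ?_
    have h₁' : 1 + x ≠ 0 := by linarith
    have h₂' : 1 - x ≠ 0 := by linarith
    rw [id, show 1 - x ^ 2 = (1 + x) * (1 - x) by ring]
    field_simp
    ring
  refine hlog.congr_of_eventuallyEq ?_
  filter_upwards [Ioo_mem_nhds h₁ h₂] with y ⟨hy₁, hy₂⟩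
  rw [artanh_eq_half_log ⟨hy₁.le, hy₂.le⟩, log_div (by linarith) (by linarith)]
  ring

theorem abs_log_le_rpow_neg_div {x ε : ℝ} (hx₀ : 0 < x) (hx₁ : x ≤ 1) (hε : 0 < ε) :
    |log x| ≤ x ^ (-ε) / ε := by
  rw [abs_of_nonpos (log_nonpos hx₀.le hx₁), ← log_inv, rpow_neg hx₀.le, ← inv_rpow hx₀.le]
  exact log_le_rpow_div (inv_nonneg.2 hx₀.le) hε

end Real

theorem integral_eq_integral_artanh {E : Type*} [NormedAddCommGroup E] [NormedSpace ℝ E]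
    (f : ℝ → E) : ∫ x, f x = ∫ u in Ioo (-1) 1, (1 - u ^ 2)⁻¹ • f (artanh u) := by
  rw [← setIntegral_univ, ← artanh_bijOn.image_eq,
    integral_image_eq_integral_abs_deriv_smul measurableSet_Ioo
      (fun u hu => (hasDerivAt_artanh hu).hasDerivWithinAt) artanh_injOn]
  refine setIntegral_congr_fun measurableSet_Ioo fun u ⟨hu₁, hu₂⟩ => ?_
  rw [abs_of_pos (inv_pos.2 (by nlinarith))]

theorem wtilde_eq_rpow_div_cosh (p x : ℝ) :
    wtilde p x = (√p / cosh ((p - 1) * x)) ^ (p - 1)⁻¹ := by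
  rw [wtilde, cosh_eq, show (1 - p) * x = -((p - 1) * x) by ring, one_div]
  congr 1
  field_simp

theorem wtilde_sq_artanh_div {p u : ℝ} (hp₀ : 0 ≤ p) (hp₁ : p ≠ 1) (hu : u ∈ Ioo (-1) 1) :
    wtilde p (artanh u / (p - 1)) ^ 2 = (p * (1 - u ^ 2)) ^ (p - 1)⁻¹ := by
  have hu₂ : 0 ≤ 1 - u ^ 2 := by nlinarith [hu.1, hu.2]
  rw [wtilde_eq_rpow_div_cosh, mul_div_cancel₀ _ (sub_ne_zero.2 hp₁), cosh_artanh hu,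
    div_div_eq_mul_div, div_one, ← sqrt_mul hp₀, sqrt_eq_rpow, ← rpow_mul (by positivity),
    ← rpow_mul_natCast (by positivity)]
  ring_nf

theorem one_sub_sq_rpow_le {u : ℝ} (hu : u ∈ Ioo (-1) 1) (r : ℝ) :
    (1 - u ^ 2) ^ r ≤ (1 - u) ^ r + (1 + u) ^ r := by
  obtain ⟨hu₁, hu₂⟩ := hu
  have h₁ : 0 ≤ (1 - u) ^ r := rpow_nonneg (by linarith) r
  have h₂ : 0 ≤ (1 + u) ^ r := rpow_nonneg (by linarith) r
  rcases le_total 0 r with hr | hr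
  · have : (1 - u ^ 2) ^ r ≤ 1 := rpow_le_one (by nlinarith) (by nlinarith) hr
    rcases le_total 0 u with hu | hu
    · linarith [one_le_rpow (by linarith : 1 ≤ 1 + u) hr]
    · linarith [one_le_rpow (by linarith : 1 ≤ 1 - u) hr]
  · rw [show 1 - u ^ 2 = (1 - u) * (1 + u) by ring, mul_rpow (by linarith) (by linarith)]
    rcases le_total 0 u with hu | hu
    · nlinarith [rpow_le_one_of_one_le_of_nonpos (by linarith : 1 ≤ 1 + u) hr]
    · nlinarith [rpow_le_one_of_one_le_of_nonpos (by linarith : 1 ≤ 1 - u) hr]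

theorem integrableOn_one_sub_sq_rpow {r : ℝ} (hr : -1 < r) :
    IntegrableOn (fun u : ℝ => (1 - u ^ 2) ^ r) (Ioo (-1) 1) := by
  have hpow : IntervalIntegrable (fun x : ℝ => x ^ r) volume 0 2 :=
    intervalIntegral.intervalIntegrable_rpow' hr
  have hsum : IntervalIntegrable (fun u : ℝ => (1 - u) ^ r + (1 + u) ^ r) volume (-1) 1 := by
    refine IntervalIntegrable.add ?_ ?_
    · convert (hpow.comp_sub_left 1).symm using 1 <;> norm_num
    · convert hpow.comp_add_left 1 using 1 <;> norm_num
  rw [intervalIntegrable_iff_integrableOn_Ioo_of_le (by norm_num)] at hsum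
  refine hsum.mono' ((Measurable.pow_const (by fun_prop) r).aestronglyMeasurable) ?_
  refine (ae_restrict_iff' measurableSet_Ioo).2 (Eventually.of_forall fun u hu => ?_)
  rw [norm_of_nonneg (rpow_nonneg (by nlinarith [hu.1, hu.2]) r)]
  exact one_sub_sq_rpow_le hu r

theorem integral_log_one_sub_sq : ∫ u in Ioo (-1) 1, log (1 - u ^ 2) = 4 * log 2 - 4 := by
  have h_add : IntervalIntegrable (fun u : ℝ => log (1 + u)) volume (-1) 1 := by
    convert (intervalIntegral.intervalIntegrable_log' (a := 0) (b := 2)).comp_add_left 1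
      using 1 <;> norm_num
  have h_sub : IntervalIntegrable (fun u : ℝ => log (1 - u)) volume (-1) 1 := by
    convert (intervalIntegral.intervalIntegrable_log' (a := 2) (b := 0)).comp_sub_left 1
      using 1 <;> norm_num
  calc ∫ u in Ioo (-1) 1, log (1 - u ^ 2)
      = ∫ u in Ioo (-1) 1, (log (1 + u) + log (1 - u)) :=
        setIntegral_congr_fun measurableSet_Ioo fun u ⟨hu₁, hu₂⟩ => by
          rw [← log_mul (by linarith) (by linarith)]; ring_nf
    _ = ∫ u in (-1)..1, (log (1 + u) + log (1 - u)) := by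
        rw [intervalIntegral.integral_of_le (by norm_num), integral_Ioc_eq_integral_Ioo]
    _ = (∫ u in (-1)..1, log (1 + u)) + ∫ u in (-1)..1, log (1 - u) :=
        intervalIntegral.integral_add h_add h_sub
    _ = 4 * log 2 - 4 := by
        rw [intervalIntegral.integral_comp_add_left, intervalIntegral.integral_comp_sub_left,
          integral_log]
        norm_num
        ring

noncomputable def oneSubSqIntegral (t : ℝ) : ℝ := ∫ u in Ioo (-1) 1, (1 - u ^ 2) ^ (t - 1)

theorem oneSubSqIntegral_one : oneSubSqIntegral 1 = 2 := by
  norm_num [oneSubSqIntegral]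

theorem hasDerivAt_oneSubSqIntegral {t : ℝ} (ht : 0 < t) :
    HasDerivAt oneSubSqIntegral
      (∫ u in Ioo (-1) 1, (1 - u ^ 2) ^ (t - 1) * log (1 - u ^ 2)) t := by
  have hmeas (s : ℝ) : AEStronglyMeasurable (fun u : ℝ => (1 - u ^ 2) ^ (s - 1))
      (volume.restrict (Ioo (-1) 1)) :=
    (Measurable.pow_const (by fun_prop) _).aestronglyMeasurable
  -- Trading `|log b|` for `b ^ (-t / 4)` keeps the exponent `t / 4 - 1` above `-1`.
  have hbound : ∀ u ∈ Ioo (-1 : ℝ) 1, ∀ s ∈ Metric.ball t (t / 2),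
      ‖(1 - u ^ 2) ^ (s - 1) * log (1 - u ^ 2)‖ ≤ 4 / t * (1 - u ^ 2) ^ (t / 4 - 1) := by
    intro u ⟨hu₁, hu₂⟩ s hs
    have hb₀ : 0 < 1 - u ^ 2 := by nlinarith
    have hb₁ : 1 - u ^ 2 ≤ 1 := by nlinarith
    have hs' : t / 2 - 1 ≤ s - 1 := by
      linarith [(abs_sub_lt_iff.1 (Metric.mem_ball.1 hs)).2]
    rw [norm_mul, norm_of_nonneg (rpow_nonneg hb₀.le _), norm_eq_abs]
    calc (1 - u ^ 2) ^ (s - 1) * |log (1 - u ^ 2)|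
        ≤ (1 - u ^ 2) ^ (t / 2 - 1) * ((1 - u ^ 2) ^ (-(t / 4)) / (t / 4)) :=
          mul_le_mul (rpow_le_rpow_of_exponent_ge hb₀ hb₁ hs')
            (abs_log_le_rpow_neg_div hb₀ hb₁ (by positivity)) (abs_nonneg _)
            (rpow_nonneg hb₀.le _)
      _ = 4 / t * (1 - u ^ 2) ^ (t / 4 - 1) := by
          rw [show t / 4 - 1 = (t / 2 - 1) + -(t / 4) by ring, rpow_add hb₀]
          field_simp
  refine (hasDerivAt_integral_of_dominated_loc_of_deriv_le
    (F := fun s u => (1 - u ^ 2) ^ (s - 1))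
    (Metric.ball_mem_nhds t (by positivity : 0 < t / 2))
    (Eventually.of_forall hmeas) (integrableOn_one_sub_sq_rpow (by linarith))
    ((hmeas t).mul (Measurable.log (by fun_prop)).aestronglyMeasurable)
    ((ae_restrict_iff' measurableSet_Ioo).2 (Eventually.of_forall hbound))
    ((integrableOn_one_sub_sq_rpow (by linarith)).const_mul _)
    ((ae_restrict_iff' measurableSet_Ioo).2
      (Eventually.of_forall fun u ⟨hu₁, hu₂⟩ s _ => ?_))).2
  simpa [mul_comm] using
    ((hasDerivAt_id s).sub_const 1).const_rpow (a := 1 - u ^ 2) (by nlinarith)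

theorem hasDerivAt_oneSubSqIntegral_one : HasDerivAt oneSubSqIntegral (4 * log 2 - 4) 1 := by
  simpa [integral_log_one_sub_sq] using hasDerivAt_oneSubSqIntegral one_pos

theorem g_eq_mul_oneSubSqIntegral {p : ℝ} (hp : 1 < p) :
    g p = (p - 1)⁻¹ * p ^ (p - 1)⁻¹ * oneSubSqIntegral (p - 1)⁻¹ := by
  have hc : 0 < p - 1 := sub_pos.2 hp
  have hintegrand : ∀ u ∈ Ioo (-1 : ℝ) 1, (1 - u ^ 2)⁻¹ • wtilde p ((p - 1)⁻¹ * artanh u) ^ 2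
      = p ^ (p - 1)⁻¹ * (1 - u ^ 2) ^ ((p - 1)⁻¹ - 1) := by
    intro u hu
    have hb₀ : 0 < 1 - u ^ 2 := by nlinarith [hu.1, hu.2]
    rw [inv_mul_eq_div, wtilde_sq_artanh_div (by linarith) hp.ne' hu,
      mul_rpow (by linarith) hb₀.le, rpow_sub_one hb₀.ne', smul_eq_mul]
    ring
  have hsub := Measure.integral_comp_mul_left (fun x => wtilde p x ^ 2) (p - 1)⁻¹
  rw [inv_inv, abs_of_pos hc, smul_eq_mul, integral_eq_integral_artanh,
    setIntegral_congr_fun measurableSet_Ioo hintegrand, integral_const_mul] at hsub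
  rw [g, oneSubSqIntegral, mul_assoc, hsub]
  field_simp

theorem stmt17 : g 2 = 4 ∧ HasDerivAt g (6 - 12 * Real.log 2) 2 := by
  have ht : HasDerivAt (fun p : ℝ => (p - 1)⁻¹) (-1) 2 := by
    refine (((hasDerivAt_id (2 : ℝ)).sub_const 1).inv (by norm_num)).congr_deriv ?_
    norm_num
  have hpow : HasDerivAt (fun p : ℝ => p ^ (p - 1)⁻¹) (1 - 2 * log 2) 2 := by
    refine ((hasDerivAt_id 2).rpow ht (by norm_num)).congr_deriv ?_
    norm_num
    ring
  have hJ : HasDerivAt (fun p : ℝ => oneSubSqIntegral (p - 1)⁻¹) (4 - 4 * log 2) 2 := by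
    refine (hasDerivAt_oneSubSqIntegral_one.comp_of_eq 2 ht (by norm_num)).congr_deriv ?_
    ring
  have hg : (fun p => (p - 1)⁻¹ * p ^ (p - 1)⁻¹ * oneSubSqIntegral (p - 1)⁻¹) =ᶠ[𝓝 2] g := by
    filter_upwards [Ioi_mem_nhds one_lt_two] with p hp
    exact (g_eq_mul_oneSubSqIntegral hp).symm
  refine ⟨by norm_num [g_eq_mul_oneSubSqIntegral one_lt_two, oneSubSqIntegral_one], ?_⟩
  refine (((ht.mul hpow).mul hJ).congr_of_eventuallyEq hg.symm).congr_deriv ?_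
  norm_num [oneSubSqIntegral_one]
  ring
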